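/- arXiv:2401.16277 — 4 statements merged into one kernel-verified Lean document; each statement's English description precedes it below -/
import Mathlib

section
/- Given three labeled transition systems L₁, L₂, L₃ with initial states, if there exists a three-way recomposition simulation relation R between them (compatible with initial states, closed under matching non-silent steps, and closed under silent steps in either of the first two systems with the third allowed to take silent steps), then for every finite trace m, if L₁ can produce m from an initial state and L₂ can produce m from an initial state, then L₃ can produce m from an initial state. -/
/-- A labeled transition system with silent (`none`) and non-silent (`some a`) steps,
and initial states. -/
structure LTS (S E : Type) where
  step : S → Option E → S → Prop
  init : S → Prop

/-- Reflexive-transitive closure of silent steps. -/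
def SilentStar {S E : Type} (L : LTS S E) : S → S → Prop :=
  Relation.ReflTransGen (fun s s' => L.step s none s')

/-- `Produces L s m`: some finite sequence of steps from `s` has exactly `m` as its
sequence of non-silent labels. -/
inductive Produces {S E : Type} (L : LTS S E) : S → List E → Prop
  | nil (s : S) : Produces L s []
  | silent {s s' : S} {m : List E} :
      L.step s none s' → Produces L s' m → Produces L s m
  | event {s s' : S} {a : E} {m : List E} :
      L.step s (some a) s' → Produces L s' m → Produces L s (a :: m)

/-- A three-way recomposition simulation relation between three LTSs. -/
def ThreeWaySim {S₁ S₂ S₃ E : Type} (L₁ : LTS S₁ E) (L₂ : LTS S₂ E) (L₃ : LTS S₃ E)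
    (R : S₁ → S₂ → S₃ → Prop) : Prop :=
  (∀ s₁ s₂, L₁.init s₁ → L₂.init s₂ → ∃ s₃, L₃.init s₃ ∧ R s₁ s₂ s₃) ∧
  (∀ s₁ s₂ s₃ a s₁' s₂', R s₁ s₂ s₃ → L₁.step s₁ (some a) s₁' → L₂.step s₂ (some a) s₂' →
    ∃ s₃'' s₃', SilentStar L₃ s₃ s₃'' ∧ L₃.step s₃'' (some a) s₃' ∧ R s₁' s₂' s₃') ∧
  (∀ s₁ s₂ s₃ s₁', R s₁ s₂ s₃ → L₁.step s₁ none s₁' →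
    ∃ s₃', SilentStar L₃ s₃ s₃' ∧ R s₁' s₂ s₃') ∧
  (∀ s₁ s₂ s₃ s₂', R s₁ s₂ s₃ → L₂.step s₂ none s₂' →
    ∃ s₃', SilentStar L₃ s₃ s₃' ∧ R s₁ s₂' s₃')

/-! A trace `a :: m` is a silent prefix, an `a`-step, and then `m`. Walking both witnesses
through `R` one such segment at a time, the silent prefixes of `L₁` and `L₂` are matched by silent
steps of `L₃` (conditions 3 and 4), and the two `a`-steps jointly by a step of `L₃` (condition 2). -/

theorem Relation.ReflTransGen.exists_simulation {α β : Type*} {r : α → α → Prop}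
    {q : β → β → Prop} {P : α → β → Prop}
    (hP : ∀ a a' b, P a b → r a a' → ∃ b', Relation.ReflTransGen q b b' ∧ P a' b')
    {a a' : α} {b : β} (h : Relation.ReflTransGen r a a') (hab : P a b) :
    ∃ b', Relation.ReflTransGen q b b' ∧ P a' b' := by
  induction h with
  | refl => exact ⟨b, .refl, hab⟩
  | tail _ hstep ih =>
    obtain ⟨c, hbc, hc⟩ := ih
    obtain ⟨b', hcb', hb'⟩ := hP _ _ _ hc hstep
    exact ⟨b', hbc.trans hcb', hb'⟩

namespace Produces

variable {S E : Type} {L : LTS S E}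

theorem of_silentStar {s t : S} {m : List E} (h : SilentStar L s t) (hp : Produces L t m) :
    Produces L s m := by
  induction h with
  | refl => exact hp
  | tail _ hstep ih => exact ih (.silent hstep hp)

theorem cons_iff {s : S} {a : E} {m : List E} :
    Produces L s (a :: m) ↔
      ∃ t t', SilentStar L s t ∧ L.step t (some a) t' ∧ Produces L t' m := by
  constructor
  · intro hp
    generalize hl : a :: m = l at hp
    induction hp with
    | nil => cases hl
    | silent hstep _ ih =>
      obtain ⟨t, t', hst, htt', hp'⟩ := ih hl
      exact ⟨t, t', .head hstep hst, htt', hp'⟩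
    | event hstep hp' =>
      cases hl
      exact ⟨_, _, .refl, hstep, hp'⟩
  · rintro ⟨t, t', hst, htt', hp'⟩
    exact of_silentStar hst (.event htt' hp')

end Produces

theorem ThreeWaySim.produces {S₁ S₂ S₃ E : Type} {L₁ : LTS S₁ E} {L₂ : LTS S₂ E}
    {L₃ : LTS S₃ E} {R : S₁ → S₂ → S₃ → Prop} (hR : ThreeWaySim L₁ L₂ L₃ R) (m : List E) :
    ∀ {s₁ s₂ s₃}, R s₁ s₂ s₃ → Produces L₁ s₁ m → Produces L₂ s₂ m → Produces L₃ s₃ m := by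
  obtain ⟨-, hevent, hsilent₁, hsilent₂⟩ := hR
  induction m with
  | nil => exact fun _ _ _ => .nil _
  | cons a m ih =>
    intro s₁ s₂ s₃ hr hp₁ hp₂
    obtain ⟨t₁, t₁', hs₁, ht₁, hp₁'⟩ := Produces.cons_iff.1 hp₁
    obtain ⟨t₂, t₂', hs₂, ht₂, hp₂'⟩ := Produces.cons_iff.1 hp₂
    obtain ⟨u₃, hsu₃, hr₁⟩ := Relation.ReflTransGen.exists_simulation
      (P := fun x y => R x s₂ y) (fun _ _ _ => hsilent₁ _ _ _ _) hs₁ hr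
    obtain ⟨v₃, huv₃, hr₂⟩ := Relation.ReflTransGen.exists_simulation
      (P := fun x y => R t₁ x y) (fun _ _ _ => hsilent₂ _ _ _ _) hs₂ hr₁
    obtain ⟨w₃, t₃', hvw₃, ht₃, hr'⟩ := hevent _ _ _ _ _ _ hr₂ ht₁ ht₂
    exact Produces.cons_iff.2
      ⟨w₃, t₃', hsu₃.trans (huv₃.trans hvw₃), ht₃, ih hr' hp₁' hp₂'⟩

/-- If a three-way recomposition simulation exists between `L₁`, `L₂`, `L₃`, then whenever
`L₁` and `L₂` can both produce the finite trace `m` from initial states, so can `L₃`. -/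
theorem threeway_recomposition {S₁ S₂ S₃ E : Type}
    (L₁ : LTS S₁ E) (L₂ : LTS S₂ E) (L₃ : LTS S₃ E)
    (hsim : ∃ R, ThreeWaySim L₁ L₂ L₃ R) (m : List E)
    (h₁ : ∃ s₁, L₁.init s₁ ∧ Produces L₁ s₁ m)
    (h₂ : ∃ s₂, L₂.init s₂ ∧ Produces L₂ s₂ m) :
    ∃ s₃, L₃.init s₃ ∧ Produces L₃ s₃ m := by
  obtain ⟨R, hR⟩ := hsim
  obtain ⟨s₁, hinit₁, hp₁⟩ := h₁
  obtain ⟨s₂, hinit₂, hp₂⟩ := h₂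
  obtain ⟨s₃, hinit₃, hr⟩ := hR.1 s₁ s₂ hinit₁ hinit₂
  exact ⟨s₃, hinit₃, hR.produces m hr hp₁ hp₂⟩
end

section
/- Uniqueness of traces in determinate systems: in a determinate labeled transition system, if a state s produces finite traces m₁ and m₂ via step sequences of the same total number of non-silent steps and both executions end in states that can take no further step, then m₁ = m₂ or one is a prefix of the other; in particular, if both executions are maximal, any two traces produced from s agree on their common prefix. -/
/-- Determinacy of a labeled transition system. -/
def Determinate {S E : Type} (step : S → Option E → S → Prop) : Prop :=
  (∀ s a₁ a₂ s₁ s₂, step s (some a₁) s₁ → step s (some a₂) s₂ → a₁ = a₂ ∧ s₁ = s₂) ∧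
  (∀ s s₁ s₂, step s none s₁ → step s none s₂ → s₁ = s₂) ∧
  (∀ s a s₁ s₂, step s none s₁ → step s (some a) s₂ → False)

/-- `ProducesTo step s m s'`: a finite step sequence from `s` to `s'` whose non-silent
labels form exactly `m`. -/
inductive ProducesTo {S E : Type} (step : S → Option E → S → Prop) : S → List E → S → Prop
  | nil (s : S) : ProducesTo step s [] s
  | silent {s s' s'' : S} {m : List E} :
      step s none s' → ProducesTo step s' m s'' → ProducesTo step s m s''
  | event {s s' s'' : S} {a : E} {m : List E} :
      step s (some a) s' → ProducesTo step s' m s'' → ProducesTo step s (a :: m) s''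

theorem determinate_traces_comparable_aux {S E : Type} (step : S → Option E → S → Prop)
    (hdet : Determinate step) {s s₁ : S} {m₁ : List E}
    (h₁ : ProducesTo step s m₁ s₁) :
    ∀ m₂ s₂, ProducesTo step s m₂ s₂ → m₁ <+: m₂ ∨ m₂ <+: m₁ := by
  obtain ⟨hd1, hd2, hd3⟩ := hdet
  induction h₁ with
  | nil s => intro m₂ s₂ _; exact Or.inl (List.nil_prefix)
  | silent hstep _ ih =>
    intro m₂ s₂ h₂
    cases h₂ with
    | nil => exact Or.inr (List.nil_prefix)
    | silent hstep' htail =>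
      cases hd2 _ _ _ hstep hstep'
      exact ih _ _ htail
    | event hstep' _ => exact absurd (hd3 _ _ _ _ hstep hstep') (fun h => h)
  | event hstep _ ih =>
    intro m₂ s₂ h₂
    cases h₂ with
    | nil => exact Or.inr (List.nil_prefix)
    | silent hstep' htail => exact absurd (hd3 _ _ _ _ hstep' hstep) (fun h => h)
    | event hstep' htail =>
      obtain ⟨rfl, rfl⟩ := hd1 _ _ _ _ _ hstep hstep'
      rcases ih _ _ htail with h | h
      · exact Or.inl ((List.cons_prefix_cons.mpr ⟨rfl, h⟩))
      · exact Or.inr ((List.cons_prefix_cons.mpr ⟨rfl, h⟩))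

/-- Uniqueness of traces in determinate systems: any two finite traces produced from the
same state are comparable under the prefix order. -/
theorem determinate_traces_comparable {S E : Type} (step : S → Option E → S → Prop)
    (hdet : Determinate step) (s : S) (m₁ m₂ : List E)
    (h₁ : ∃ s₁, ProducesTo step s m₁ s₁) (h₂ : ∃ s₂, ProducesTo step s m₂ s₂) :
    m₁ <+: m₂ ∨ m₂ <+: m₁ := by
  obtain ⟨s₁, h₁⟩ := h₁
  obtain ⟨s₂, h₂⟩ := h₂
  exact determinate_traces_comparable_aux step hdet h₁ m₂ s₂ h₂
end

section
/- Memory injections compose: if j₁ injects memory M₁ into M₂ and j₂ injects M₂ into M₃, then the composition j₂ ∘ j₁ (defined by (j₂ ∘ j₁) b = some (b'', z₁ + z₂) when j₁ b = some (b', z₁) and j₂ b' = some (b'', z₂)) injects M₁ into M₃. -/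
/-- Values: pointers, the undefined value, or scalars. -/
inductive Val (Block Scalar : Type)
  | ptr (b : Block) (o : ℤ)
  | undef
  | scalar (s : Scalar)

/-- Value injection under a memory injection `j`. -/
inductive InjVal {Block Scalar : Type} (j : Block → Option (Block × ℤ)) :
    Val Block Scalar → Val Block Scalar → Prop
  | ptr {b o b' z} : j b = some (b', z) → InjVal j (Val.ptr b o) (Val.ptr b' (o + z))
  | undef (v : Val Block Scalar) : InjVal j Val.undef v
  | scalar (s : Scalar) : InjVal j (Val.scalar s) (Val.scalar s)

/-- Memory injection: `j` injects `M` into `M'`. -/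
def InjMem {Block Scalar : Type} (j : Block → Option (Block × ℤ))
    (M M' : Block × ℤ → Option (Val Block Scalar)) : Prop :=
  ∀ b b' z o v, j b = some (b', z) → M (b, o) = some v →
    ∃ v', M' (b', o + z) = some v' ∧ InjVal j v v'

/-- Composition of injections: `(j₂ ∘ j₁) b = some (b'', z₁ + z₂)` when
`j₁ b = some (b', z₁)` and `j₂ b' = some (b'', z₂)`. -/
def injComp {Block : Type} (j₂ j₁ : Block → Option (Block × ℤ)) :
    Block → Option (Block × ℤ) := fun b =>
  match j₁ b with
  | some (b', z₁) =>
    match j₂ b' with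
    | some (b'', z₂) => some (b'', z₁ + z₂)
    | none => none
  | none => none

/-- Memory injections compose. -/
theorem injMem_comp {Block Scalar : Type} (j₁ j₂ : Block → Option (Block × ℤ))
    (M₁ M₂ M₃ : Block × ℤ → Option (Val Block Scalar))
    (h₁ : InjMem j₁ M₁ M₂) (h₂ : InjMem j₂ M₂ M₃) :
    InjMem (injComp j₂ j₁) M₁ M₃ := by
  intro b b'' z o v hj hv
  unfold injComp at hj
  obtain ⟨⟨b', z₁⟩, hj1⟩ : ∃ p, j₁ b = some p := by
    cases h : j₁ b with
    | none => simp [h] at hj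
    | some p => exact ⟨p, rfl⟩
  simp only [hj1] at hj
  obtain ⟨⟨b2, z₂⟩, hj2⟩ : ∃ p, j₂ b' = some p := by
    cases h : j₂ b' with
    | none => simp [h] at hj
    | some p => exact ⟨p, rfl⟩
  simp only [hj2] at hj
  simp only [Option.some.injEq, Prod.mk.injEq] at hj
  obtain ⟨rfl, rfl⟩ := hj
  obtain ⟨v', hv', hi1⟩ := h₁ b b' z₁ o v hj1 hv
  obtain ⟨v'', hv'', hi2⟩ := h₂ b' b2 z₂ (o + z₁) v' hj2 hv'
  refine ⟨v'', by rw [← add_assoc]; exact hv'', ?_⟩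
  cases hi1 with
  | undef => exact InjVal.undef _
  | scalar s =>
    cases hi2 with
    | scalar => exact InjVal.scalar s
  | @ptr bb oo bb' zz h =>
    cases hi2 with
    | @ptr _ _ bb'' zz' h' =>
      have : InjVal (injComp j₂ j₁) (Val.ptr (Scalar := Scalar) bb oo) (Val.ptr bb'' (oo + (zz + zz'))) :=
        InjVal.ptr (by simp [injComp, h, h'])
      rwa [show oo + (zz + zz') = oo + zz + zz' by ring] at this
end

section
/- Three-way simulation relation decomposition: if strong relation ∼, weak relation ≡, and mixed relation M satisfy the eight recomposition diagrams (including: synchronized silent step preserving ∼, ≡, M; weak-side silent step preserving relations with the other two executions idle; and synchronized non-silent steps with possible swapping of ∼ and ≡), then the relation R(s₁,s₂,s₃) defined as a disjunction of ((s₁ ≡ s₃) ∧ (s₂ ∼ s₃) ∧ M(s₁,s₂,s₃)) and ((s₁ ∼ s₃) ∧ (s₂ ≡ s₃) ∧ M(s₁,s₂,s₃)) is a three-way recomposition simulation. -/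
/-- Decomposition of the three-way simulation relation into strong (`∼`), weak (`≡`),
and mixed (`M`) relations: if the eight recomposition diagrams hold, then the
disjunctive relation `R` is a three-way recomposition simulation. -/
theorem threeway_sim_decomposition {S E : Type}
    (L₁ L₂ L₃ : LTS S E)
    (strong : S → S → Prop)  -- ∼
    (weak : S → S → Prop)    -- ≡
    (M : S → S → S → Prop)
    -- Initial-states condition
    (hinit : ∀ s₁ s₂, L₁.init s₁ → L₂.init s₂ → ∃ s₃, L₃.init s₃ ∧
      ((weak s₁ s₃ ∧ strong s₂ s₃ ∧ M s₁ s₂ s₃) ∨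
       (strong s₁ s₃ ∧ weak s₂ s₃ ∧ M s₁ s₂ s₃)))
    -- (a) silent step of the weakly related first execution, third catches up silently
    (ha : ∀ s₁ s₂ s₃ s₁', weak s₁ s₃ → strong s₂ s₃ → M s₁ s₂ s₃ →
      L₁.step s₁ none s₁' →
      ∃ s₃', SilentStar L₃ s₃ s₃' ∧ weak s₁' s₃' ∧ strong s₂ s₃' ∧ M s₁' s₂ s₃')
    -- (a') symmetric: silent step of the weakly related second execution
    (ha' : ∀ s₁ s₂ s₃ s₂', strong s₁ s₃ → weak s₂ s₃ → M s₁ s₂ s₃ →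
      L₂.step s₂ none s₂' →
      ∃ s₃', SilentStar L₃ s₃ s₃' ∧ strong s₁ s₃' ∧ weak s₂' s₃' ∧ M s₁ s₂' s₃')
    -- (b) silent step of the strongly related second execution, others idle
    (hb : ∀ s₁ s₂ s₃ s₂', weak s₁ s₃ → strong s₂ s₃ → M s₁ s₂ s₃ →
      L₂.step s₂ none s₂' → strong s₂' s₃ ∧ M s₁ s₂' s₃)
    -- (b') symmetric: silent step of the strongly related first execution
    (hb' : ∀ s₁ s₂ s₃ s₁', strong s₁ s₃ → weak s₂ s₃ → M s₁ s₂ s₃ →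
      L₁.step s₁ none s₁' → strong s₁' s₃ ∧ M s₁' s₂ s₃)
    -- (c) synchronized non-silent steps, with possible swapping of ∼ and ≡
    (hc : ∀ s₁ s₂ s₃ a s₁' s₂', weak s₁ s₃ → strong s₂ s₃ → M s₁ s₂ s₃ →
      L₁.step s₁ (some a) s₁' → L₂.step s₂ (some a) s₂' →
      ∃ s₃'' s₃', SilentStar L₃ s₃ s₃'' ∧ L₃.step s₃'' (some a) s₃' ∧
        ((weak s₁' s₃' ∧ strong s₂' s₃') ∨ (strong s₁' s₃' ∧ weak s₂' s₃')) ∧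
        M s₁' s₂' s₃')
    -- (c') symmetric version with the roles of the two disjuncts swapped
    (hc' : ∀ s₁ s₂ s₃ a s₁' s₂', strong s₁ s₃ → weak s₂ s₃ → M s₁ s₂ s₃ →
      L₁.step s₁ (some a) s₁' → L₂.step s₂ (some a) s₂' →
      ∃ s₃'' s₃', SilentStar L₃ s₃ s₃'' ∧ L₃.step s₃'' (some a) s₃' ∧
        ((strong s₁' s₃' ∧ weak s₂' s₃') ∨ (weak s₁' s₃' ∧ strong s₂' s₃')) ∧
        M s₁' s₂' s₃') :
    ThreeWaySim L₁ L₂ L₃ (fun s₁ s₂ s₃ =>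
      (weak s₁ s₃ ∧ strong s₂ s₃ ∧ M s₁ s₂ s₃) ∨
      (strong s₁ s₃ ∧ weak s₂ s₃ ∧ M s₁ s₂ s₃)) := by
  refine ⟨hinit, ?_, ?_, ?_⟩
  · rintro s₁ s₂ s₃ a s₁' s₂' (⟨hw,hs,hm⟩|⟨hs,hw,hm⟩) h1 h2
    · obtain ⟨t, t', ha1, ha2, hd, hm'⟩ := hc s₁ s₂ s₃ a s₁' s₂' hw hs hm h1 h2
      exact ⟨t, t', ha1, ha2, hd.imp (fun ⟨x,y⟩ => ⟨x,y,hm'⟩) (fun ⟨x,y⟩ => ⟨x,y,hm'⟩)⟩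
    · obtain ⟨t, t', ha1, ha2, hd, hm'⟩ := hc' s₁ s₂ s₃ a s₁' s₂' hs hw hm h1 h2
      exact ⟨t, t', ha1, ha2, hd.symm.imp (fun ⟨x,y⟩ => ⟨x,y,hm'⟩) (fun ⟨x,y⟩ => ⟨x,y,hm'⟩)⟩
  · rintro s₁ s₂ s₃ s₁' (⟨hw,hs,hm⟩|⟨hs,hw,hm⟩) h1
    · obtain ⟨t, ht, hw', hs', hm'⟩ := ha s₁ s₂ s₃ s₁' hw hs hm h1
      exact ⟨t, ht, Or.inl ⟨hw', hs', hm'⟩⟩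
    · obtain ⟨hs', hm'⟩ := hb' s₁ s₂ s₃ s₁' hs hw hm h1
      exact ⟨s₃, Relation.ReflTransGen.refl, Or.inr ⟨hs', hw, hm'⟩⟩
  · rintro s₁ s₂ s₃ s₂' (⟨hw,hs,hm⟩|⟨hs,hw,hm⟩) h2
    · obtain ⟨hs', hm'⟩ := hb s₁ s₂ s₃ s₂' hw hs hm h2
      exact ⟨s₃, Relation.ReflTransGen.refl, Or.inl ⟨hw, hs', hm'⟩⟩
    · obtain ⟨t, ht, hs', hw', hm'⟩ := ha' s₁ s₂ s₃ s₂' hs hw hm h2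
      exact ⟨t, ht, Or.inr ⟨hs', hw', hm'⟩⟩
end
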